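/- Let M be a monoid such that there is no injective multiplicative homomorphism from M into any group, and let M̂ = M ∪ {e′} be the monoid obtained by adjoining a new element e′ to M and declaring e′ to be the identity (multiplication of elements of M is unchanged). Then M̂ is (2)-sofic but not (3)-sofic. In particular, (2)-soficity does not imply (3)-soficity for monoids. -/
import Mathlib


/-- Normalized Hamming distance between two self-maps of a (finite) type. -/
noncomputable def dHam {X : Type} (f g : X → X) : ℝ :=
  (({x : X | f x ≠ g x}).ncard : ℝ) / (Nat.card X)

/-- A `(K, ε)`-action of a monoid `M` on a type `X` (intended finite and nonempty). -/
def IsKEAction {M : Type*} [Monoid M] (K : Finset M) (ε : ℝ) {X : Type}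
    (ψ : M → X → X) : Prop :=
  (∀ s ∈ K, ∀ t ∈ K, s * t ∈ K → dHam (ψ (s * t)) (ψ s ∘ ψ t) ≤ ε) ∧
  ((1 : M) ∈ K → dHam (ψ 1) id ≤ ε) ∧
  (∀ s ∈ K, ∀ t ∈ K, s ≠ t → 1 - ε ≤ dHam (ψ s) (ψ t))

/-- A monoid is (2)-sofic if for every finite `K ⊆ M` and every `ε > 0` it admits a
`(K, ε)`-action on some nonempty finite set. -/
def IsSofic2 (M : Type*) [Monoid M] : Prop :=
  ∀ (K : Finset M) (ε : ℝ), 0 < ε →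
    ∃ (X : Type), Finite X ∧ Nonempty X ∧ ∃ ψ : M → X → X, IsKEAction K ε ψ

/-- A monoid is (3)-sofic if for every finite `K ⊆ M` and every `ε > 0` it admits a
`(K, ε)`-action on some nonempty finite set `X` such that the uniform probability
measure on `X` is approximately invariant. -/
def IsSofic3 (M : Type*) [Monoid M] : Prop :=
  ∀ (K : Finset M) (ε : ℝ), 0 < ε →
    ∃ (X : Type), Finite X ∧ Nonempty X ∧ ∃ ψ : M → X → X, IsKEAction K ε ψ ∧
      ∀ s ∈ K, ∀ E : Set X,
        |(E.ncard : ℝ) - ((ψ s ⁻¹' E).ncard : ℝ)| ≤ ε * (Nat.card X : ℝ)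

namespace AdjoinOneSoficAux

/-! ### Generic lemmas about `dHam` -/

lemma dHam_self {X : Type} (f : X → X) : dHam f f = 0 := by
  unfold dHam; simp

lemma dHam_le_of_ncard_le {X : Type} [Finite X] [Nonempty X] {f g : X → X} {c : ℝ}
    (h : (({x : X | f x ≠ g x}).ncard : ℝ) ≤ c * Nat.card X) : dHam f g ≤ c := by
  have hN : (0 : ℝ) < (Nat.card X : ℝ) := by exact_mod_cast Nat.card_pos
  rw [dHam, div_le_iff₀ hN]
  exact h

lemma le_dHam_of_le_ncard {X : Type} [Finite X] [Nonempty X] {f g : X → X} {c : ℝ}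
    (h : c * Nat.card X ≤ (({x : X | f x ≠ g x}).ncard : ℝ)) : c ≤ dHam f g := by
  have hN : (0 : ℝ) < (Nat.card X : ℝ) := by exact_mod_cast Nat.card_pos
  rw [dHam, le_div_iff₀ hN]
  exact h

lemma dHam_le_ncard_div {X : Type} [Finite X] [Nonempty X] {f g : X → X} {c : ℝ}
    (h : dHam f g ≤ c) :
    (({x : X | f x ≠ g x}).ncard : ℝ) ≤ c * Nat.card X := by
  have hN : (0 : ℝ) < (Nat.card X : ℝ) := by exact_mod_cast Nat.card_pos
  rw [dHam, div_le_iff₀ hN] at h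
  exact h

/-! ### The construction for (2)-soficity of `WithOne M` -/

variable {M : Type*} [Monoid M]

open Classical in
/-- Encode an element of `WithOne M` as a point of `Fin A.card ⊕ Unit`. -/
noncomputable def enc (A : Finset (WithOne M)) (m : WithOne M) : Fin A.card ⊕ Unit :=
  if h : m ∈ A then Sum.inl (A.equivFin ⟨m, h⟩) else Sum.inr ()

lemma enc_of_mem {A : Finset (WithOne M)} {m : WithOne M} (h : m ∈ A) :
    enc A m = Sum.inl (A.equivFin ⟨m, h⟩) := by
  unfold enc; rw [dif_pos h]

lemma enc_inj {A : Finset (WithOne M)} {m m' : WithOne M} (h : m ∈ A) (h' : m' ∈ A)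
    (he : enc A m = enc A m') : m = m' := by
  rw [enc_of_mem h, enc_of_mem h'] at he
  have := A.equivFin.injective (Sum.inl.inj he)
  exact congrArg Subtype.val this

open Classical in
/-- The approximate action used for (2)-soficity. -/
noncomputable def psi (A : Finset (WithOne M)) (W : ℕ) (s : WithOne M) :
    (Fin W ⊕ (Fin A.card ⊕ Unit)) → (Fin W ⊕ (Fin A.card ⊕ Unit)) :=
  fun x =>
    if s ∈ A then
      Sum.elim (fun _ => Sum.inr (enc A s))
        (Sum.elim
          (fun i => Sum.inr (enc A (s * ((A.equivFin.symm i : {y // y ∈ A}) : WithOne M))))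
          (fun _ => Sum.inr (Sum.inr ()))) x
    else x

lemma psi_inl {A : Finset (WithOne M)} {W : ℕ} {s : WithOne M} (h : s ∈ A) (w : Fin W) :
    psi A W s (Sum.inl w) = Sum.inr (enc A s) := by
  simp [psi, h]

lemma psi_mid {A : Finset (WithOne M)} {W : ℕ} {s : WithOne M} (h : s ∈ A) (i : Fin A.card) :
    psi A W s (Sum.inr (Sum.inl i)) =
      Sum.inr (enc A (s * ((A.equivFin.symm i : {y // y ∈ A}) : WithOne M))) := by
  simp [psi, h]

lemma psi_sink {A : Finset (WithOne M)} {W : ℕ} {s : WithOne M} (h : s ∈ A) (u : Unit) :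
    psi A W s (Sum.inr (Sum.inr u)) = Sum.inr (Sum.inr ()) := by
  simp [psi, h]

lemma psi_of_notMem {A : Finset (WithOne M)} {W : ℕ} {s : WithOne M} (h : s ∉ A) :
    psi A W s = id := by
  funext x; simp [psi, h]

lemma comp_subset {A : Finset (WithOne M)} {W : ℕ} {s t : WithOne M}
    (hs : s ∈ A) (ht : t ∈ A) (hst : s * t ∈ A) :
    {x | psi A W (s * t) x ≠ (psi A W s ∘ psi A W t) x} ⊆
      Set.range (fun i : Fin A.card => (Sum.inr (Sum.inl i) : Fin W ⊕ (Fin A.card ⊕ Unit))) := by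
  intro x hx
  rcases x with w | i | u
  · exfalso
    apply hx
    have h1 : psi A W t (Sum.inl w : Fin W ⊕ (Fin A.card ⊕ Unit)) =
        Sum.inr (Sum.inl (A.equivFin ⟨t, ht⟩)) := by
      rw [psi_inl ht, enc_of_mem ht]
    show psi A W (s * t) (Sum.inl w) = psi A W s (psi A W t (Sum.inl w))
    rw [h1, psi_mid hs, psi_inl hst, Equiv.symm_apply_apply]
  · exact ⟨i, rfl⟩
  · exfalso
    apply hx
    show psi A W (s * t) (Sum.inr (Sum.inr u)) = psi A W s (psi A W t (Sum.inr (Sum.inr u)))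
    rw [psi_sink ht, psi_sink hs, psi_sink hst]

lemma sep_superset {A : Finset (WithOne M)} {W : ℕ} {s t : WithOne M}
    (hs : s ∈ A) (hne : s ≠ t) :
    Set.range (fun w : Fin W => (Sum.inl w : Fin W ⊕ (Fin A.card ⊕ Unit))) ⊆
      {x | psi A W s x ≠ psi A W t x} := by
  rintro x ⟨w, rfl⟩
  by_cases ht : t ∈ A
  · show psi A W s (Sum.inl w) ≠ psi A W t (Sum.inl w)
    rw [psi_inl hs, psi_inl ht]
    intro hcon
    exact hne (enc_inj hs ht (Sum.inr.inj hcon))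
  · show psi A W s (Sum.inl w) ≠ psi A W t (Sum.inl w)
    rw [psi_inl hs, psi_of_notMem ht]
    simp

lemma ncard_range_inr_inl (A : Finset (WithOne M)) (W : ℕ) :
    (Set.range (fun i : Fin A.card =>
      (Sum.inr (Sum.inl i) : Fin W ⊕ (Fin A.card ⊕ Unit)))).ncard = A.card := by
  have hinj : Function.Injective
      (fun i : Fin A.card => (Sum.inr (Sum.inl i) : Fin W ⊕ (Fin A.card ⊕ Unit))) := by
    intro a b h; simpa using h
  rw [← Set.image_univ, Set.ncard_image_of_injective _ hinj, Set.ncard_univ]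
  simp

lemma ncard_range_inl (A : Finset (WithOne M)) (W : ℕ) :
    (Set.range (fun w : Fin W =>
      (Sum.inl w : Fin W ⊕ (Fin A.card ⊕ Unit)))).ncard = W := by
  have hinj : Function.Injective
      (fun w : Fin W => (Sum.inl w : Fin W ⊕ (Fin A.card ⊕ Unit))) := by
    intro a b h; simpa using h
  rw [← Set.image_univ, Set.ncard_image_of_injective _ hinj, Set.ncard_univ]
  simp

end AdjoinOneSoficAux

open AdjoinOneSoficAux in
/-- Let `M` be a monoid admitting no injective multiplicative homomorphism into any
group, and let `M̂ = WithOne M` be the monoid obtained by adjoining a new element `e'`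
to `M` and declaring `e'` to be the identity (multiplication of elements of `M` is
unchanged).  Then `M̂` is (2)-sofic but not (3)-sofic; in particular, (2)-soficity does
not imply (3)-soficity for monoids. -/
theorem adjoinOne_sofic2_not_sofic3 {M : Type u} [Monoid M]
    (hM : ∀ (G : Type v) [Group G] (f : M → G),
      (∀ a b : M, f (a * b) = f a * f b) → ¬ Function.Injective f) :
    IsSofic2 (WithOne M) ∧ ¬ IsSofic3 (WithOne M) := by
  constructor
  · -- (2)-soficity
    intro K ε hε
    classical
    set A : Finset (WithOne M) := K.erase 1 with hA
    set n : ℕ := A.card with hn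
    set W : ℕ := ⌈((n : ℝ) + 1) / ε⌉₊ with hWdef
    refine ⟨Fin W ⊕ (Fin n ⊕ Unit), inferInstance, ⟨Sum.inr (Sum.inr ())⟩,
      psi A W, ?_, ?_, ?_⟩
    · -- approximate multiplicativity
      intro s hs t ht hst
      have hNcard : (Nat.card (Fin W ⊕ (Fin n ⊕ Unit)) : ℝ) = (W : ℝ) + ((n : ℝ) + 1) := by
        simp [Nat.card_sum]
      have hWle : ((n : ℝ) + 1) ≤ ε * W := by
        have h2 : ((n : ℝ) + 1) / ε ≤ (W : ℝ) := Nat.le_ceil _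
        rw [div_le_iff₀ hε] at h2
        nlinarith
      have hεN : ((n : ℝ) + 1) ≤ ε * ((W : ℝ) + ((n : ℝ) + 1)) := by nlinarith
      by_cases h1 : s = 1
      · subst h1
        have hid : psi A W (1 : WithOne M) = id :=
          psi_of_notMem (by rw [hA]; exact Finset.notMem_erase _ _)
        rw [one_mul, hid, Function.id_comp, dHam_self]
        exact le_of_lt hε
      by_cases h2 : t = 1
      · subst h2
        have hid : psi A W (1 : WithOne M) = id :=
          psi_of_notMem (by rw [hA]; exact Finset.notMem_erase _ _)
        rw [mul_one, hid, Function.comp_id, dHam_self]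
        exact le_of_lt hε
      · have hsA : s ∈ A := by rw [hA]; exact Finset.mem_erase.mpr ⟨h1, hs⟩
        have htA : t ∈ A := by rw [hA]; exact Finset.mem_erase.mpr ⟨h2, ht⟩
        have hstne : s * t ≠ 1 := by
          obtain ⟨a, rfl⟩ := WithOne.ne_one_iff_exists.mp h1
          obtain ⟨b, rfl⟩ := WithOne.ne_one_iff_exists.mp h2
          rw [← WithOne.coe_mul]
          exact WithOne.coe_ne_one
        have hstA : s * t ∈ A := by rw [hA]; exact Finset.mem_erase.mpr ⟨hstne, hst⟩
        apply dHam_le_of_ncard_le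
        have hsub := comp_subset (W := W) hsA htA hstA
        have hcard : ({x | psi A W (s * t) x ≠ (psi A W s ∘ psi A W t) x}).ncard ≤ n := by
          calc ({x | psi A W (s * t) x ≠ (psi A W s ∘ psi A W t) x}).ncard
              ≤ (Set.range (fun i : Fin A.card =>
                  (Sum.inr (Sum.inl i) : Fin W ⊕ (Fin A.card ⊕ Unit)))).ncard :=
                Set.ncard_le_ncard hsub (Set.toFinite _)
            _ = n := by rw [ncard_range_inr_inl]
        rw [hNcard]
        calc (({x | psi A W (s * t) x ≠ (psi A W s ∘ psi A W t) x}).ncard : ℝ)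
            ≤ (n : ℝ) := by exact_mod_cast hcard
          _ ≤ (n : ℝ) + 1 := by linarith
          _ ≤ ε * ((W : ℝ) + ((n : ℝ) + 1)) := hεN
    · -- identity
      intro _
      have hid : psi A W (1 : WithOne M) = id :=
        psi_of_notMem (by rw [hA]; exact Finset.notMem_erase _ _)
      rw [hid, dHam_self]
      exact le_of_lt hε
    · -- separation
      intro s hs t ht hne
      have hNcard : (Nat.card (Fin W ⊕ (Fin n ⊕ Unit)) : ℝ) = (W : ℝ) + ((n : ℝ) + 1) := by
        simp [Nat.card_sum]
      have hWle : ((n : ℝ) + 1) ≤ ε * W := by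
        have h2 : ((n : ℝ) + 1) / ε ≤ (W : ℝ) := Nat.le_ceil _
        rw [div_le_iff₀ hε] at h2
        nlinarith
      have hεN : ((n : ℝ) + 1) ≤ ε * ((W : ℝ) + ((n : ℝ) + 1)) := by nlinarith
      have key : ∀ s' t' : WithOne M, s' ∈ A → s' ≠ t' → 1 - ε ≤ dHam (psi A W s') (psi A W t') := by
        intro s' t' hs'A hne'
        apply le_dHam_of_le_ncard
        have hsub := sep_superset (W := W) hs'A hne'
        have hcard : W ≤ ({x | psi A W s' x ≠ psi A W t' x}).ncard := by
          calc W = (Set.range (fun w : Fin W =>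
                (Sum.inl w : Fin W ⊕ (Fin A.card ⊕ Unit)))).ncard := (ncard_range_inl A W).symm
            _ ≤ ({x | psi A W s' x ≠ psi A W t' x}).ncard :=
                Set.ncard_le_ncard hsub (Set.toFinite _)
        have hcard' : (W : ℝ) ≤ (({x | psi A W s' x ≠ psi A W t' x}).ncard : ℝ) := by
          exact_mod_cast hcard
        rw [hNcard]
        nlinarith
      by_cases h1 : s = 1
      · subst h1
        have htA : t ∈ A := by rw [hA]; exact Finset.mem_erase.mpr ⟨Ne.symm hne, ht⟩
        have := key t 1 htA (Ne.symm hne)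
        calc (1 : ℝ) - ε ≤ dHam (psi A W t) (psi A W 1) := this
          _ = dHam (psi A W 1) (psi A W t) := by
              unfold dHam
              congr 1
              norm_cast
              apply congrArg
              ext x
              exact ne_comm
      · have hsA : s ∈ A := by rw [hA]; exact Finset.mem_erase.mpr ⟨h1, hs⟩
        exact key s t hsA hne
  · -- not (3)-sofic
    intro h3
    classical
    set u : WithOne M := ((1 : M) : WithOne M) with hu
    have hune : u ≠ 1 := WithOne.coe_ne_one
    obtain ⟨X, hfin, hne, ψ, ⟨hcomp, hident, hsep⟩, hmeas⟩ :=
      h3 {1, u} (1 / 8) (by norm_num)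
    have h1K : (1 : WithOne M) ∈ ({1, u} : Finset (WithOne M)) := by simp
    have huK : u ∈ ({1, u} : Finset (WithOne M)) := by simp
    have huu : u * u = u := by rw [hu, ← WithOne.coe_mul, one_mul]
    have hN : (0 : ℝ) < (Nat.card X : ℝ) := by exact_mod_cast Nat.card_pos
    -- composition bound for the idempotent u
    have hc : dHam (ψ u) (ψ u ∘ ψ u) ≤ 1 / 8 := by
      have := hcomp u huK u huK (by rw [huu]; exact huK)
      rwa [huu] at this
    have hBcard : (({x : X | ψ u x ≠ (ψ u ∘ ψ u) x}).ncard : ℝ) ≤ (1 / 8) * Nat.card X :=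
      dHam_le_ncard_div hc
    set D : Set X := {x | ψ u x ≠ x} with hD
    have hpre : ψ u ⁻¹' D ⊆ {x : X | ψ u x ≠ (ψ u ∘ ψ u) x} := by
      intro x hx
      exact Ne.symm hx
    have hpcard : ((ψ u ⁻¹' D).ncard : ℝ) ≤ (1 / 8) * Nat.card X := by
      have h' : (ψ u ⁻¹' D).ncard ≤ ({x : X | ψ u x ≠ (ψ u ∘ ψ u) x}).ncard :=
        Set.ncard_le_ncard hpre (Set.toFinite _)
      calc ((ψ u ⁻¹' D).ncard : ℝ) ≤ (({x : X | ψ u x ≠ (ψ u ∘ ψ u) x}).ncard : ℝ) := by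
            exact_mod_cast h'
        _ ≤ (1 / 8) * Nat.card X := hBcard
    have hmeasD := hmeas u huK D
    have hDcard : ((D.ncard : ℝ)) ≤ (2 / 8) * Nat.card X := by
      have habs := abs_le.mp hmeasD
      linarith [habs.2]
    -- ψ 1 is close to id
    have hidcard : (({x : X | ψ 1 x ≠ id x}).ncard : ℝ) ≤ (1 / 8) * Nat.card X :=
      dHam_le_ncard_div (hident h1K)
    -- triangle inequality
    have hsub : {x : X | ψ 1 x ≠ ψ u x} ⊆ {x : X | ψ 1 x ≠ id x} ∪ D := by
      intro x hx
      by_cases h : ψ 1 x = x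
      · right
        intro hcon
        exact hx (by rw [h, hcon])
      · left
        exact h
    have htri : (({x : X | ψ 1 x ≠ ψ u x}).ncard : ℝ) ≤
        (({x : X | ψ 1 x ≠ id x}).ncard : ℝ) + (D.ncard : ℝ) := by
      have h1 : ({x : X | ψ 1 x ≠ ψ u x}).ncard ≤
          ({x : X | ψ 1 x ≠ id x} ∪ D).ncard :=
        Set.ncard_le_ncard hsub (Set.toFinite _)
      have h2 := Set.ncard_union_le {x : X | ψ 1 x ≠ id x} D
      have := le_trans h1 h2
      exact_mod_cast this
    have hsep' := hsep 1 h1K u huK (Ne.symm hune)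
    have hsepcard : (1 - 1 / 8) * (Nat.card X : ℝ) ≤
        (({x : X | ψ 1 x ≠ ψ u x}).ncard : ℝ) := by
      rw [dHam, le_div_iff₀ hN] at hsep'
      exact hsep'
    nlinarith
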